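/- In the fixed run setting, for every i ≤ n and every t ∈ 𝒞, σ*μᵢ*(t) = zap(σμᵢ(t)). -/
import Mathlib


open scoped Classical

/-! ## Terms -/

inductive Term : Type
  | name : ℕ → Term
  | var  : ℕ → Term
  | pair : Term → Term → Term
  | enc  : Term → Term → Term
deriving DecidableEq

namespace Term

def subterms : Term → Set Term
  | name n => {name n}
  | var x => {var x}
  | pair a b => insert (pair a b) (subterms a ∪ subterms b)
  | enc a b => insert (enc a b) (subterms a ∪ subterms b)

def tvars : Term → Set ℕ
  | name _ => ∅
  | var x => {x}
  | pair a b => tvars a ∪ tvars b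
  | enc a b => tvars a ∪ tvars b

/-- A term is ground if it contains no variables. -/
def ground (t : Term) : Prop := tvars t = ∅

end Term

def sSubterms (X : Set Term) : Set Term := ⋃ t ∈ X, t.subterms
def sVars (X : Set Term) : Set ℕ := ⋃ t ∈ X, t.tvars
def varTerms (V : Set ℕ) : Set Term := Term.var '' V
def pairSubterms (E : Set (Term × Term)) : Set Term :=
  ⋃ e ∈ E, (Term.subterms e.1 ∪ Term.subterms e.2)

/-! ## Substitutions -/

abbrev Subst := ℕ → Term

namespace Subst

def app (σ : Subst) : Term → Term
  | Term.name n => Term.name n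
  | Term.var x => σ x
  | Term.pair a b => Term.pair (app σ a) (app σ b)
  | Term.enc a b => Term.enc (app σ a) (app σ b)

def dom (σ : Subst) : Set ℕ := {x | σ x ≠ Term.var x}

/-- A (totally) ground substitution. -/
def isGround (σ : Subst) : Prop := ∀ x, (σ x).ground

end Subst

def pairImg (σ : Subst) (E : Set (Term × Term)) : Set (Term × Term) :=
  (fun e => (σ.app e.1, σ.app e.2)) '' E

/-! ## Dolev-Yao derivability.  `inv` gives the inverse of a key. -/

inductive dy (inv : Term → Term) (X : Set Term) : Term → Prop
  | ax {t} : t ∈ X → dy inv X t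
  | pair {t u} : dy inv X t → dy inv X u → dy inv X (Term.pair t u)
  | enc {t k} : dy inv X t → dy inv X k → dy inv X (Term.enc t k)
  | fst {t u} : dy inv X (Term.pair t u) → dy inv X t
  | snd {t u} : dy inv X (Term.pair t u) → dy inv X u
  | dec {t k} : dy inv X (Term.enc t k) → dy inv X (inv k) → dy inv X t

/-! ## Positions -/

def positions : Term → Set (List Bool)
  | Term.pair a b =>
      insert [] ((List.cons false) '' positions a ∪ (List.cons true) '' positions b)
  | Term.enc a b =>
      insert [] ((List.cons false) '' positions a ∪ (List.cons true) '' positions b)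
  | _ => {[]}

def subtermAt : Term → List Bool → Option Term
  | t, [] => some t
  | Term.pair a b, i :: p => subtermAt (if i then b else a) p
  | Term.enc a b, i :: p => subtermAt (if i then b else a) p
  | _, _ :: _ => none

/-- Positions of `t` at which the variable `x` occurs. -/
def posof (x : ℕ) (t : Term) : Set (List Bool) := {p | subtermAt t p = some (Term.var x)}

/-- Replace the subterms at every position in `P` by `r`. -/
noncomputable def replaceAt : Term → Set (List Bool) → Term → Term
  | Term.pair a b, P, r =>
      if [] ∈ P then r
      else Term.pair (replaceAt a {p | false :: p ∈ P} r) (replaceAt b {p | true :: p ∈ P} r)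
  | Term.enc a b, P, r =>
      if [] ∈ P then r
      else Term.enc (replaceAt a {p | false :: p ∈ P} r) (replaceAt b {p | true :: p ∈ P} r)
  | t, P, r => if [] ∈ P then r else t

/-- `Qpos t p`: the root position together with all positions `q ++ [i]` of `t`
where `q` is a proper prefix of `p`. -/
def Qpos (t : Term) (p : List Bool) : Set (List Bool) :=
  insert [] {q | q ∈ positions t ∧ ∃ q' i, q = q' ++ [i] ∧ q' <+: p ∧ q' ≠ p}

/-- Abstractable positions of `t` with respect to `S`. -/
def absPos (inv : Term → Term) (S : Set Term) (t : Term) : Set (List Bool) :=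
  {p | p ∈ positions t ∧ ∀ q ∈ Qpos t p, ∀ s, subtermAt t q = some s → dy inv S s}

/-! ## Assertions: `∃ bv. (l ⋈ r)` -/

structure Assertion : Type where
  bv : List ℕ
  l : Term
  r : Term
deriving DecidableEq

namespace Assertion

def bvSet (α : Assertion) : Set ℕ := {x | x ∈ α.bv}
def fv (α : Assertion) : Set ℕ := (α.l.tvars ∪ α.r.tvars) \ α.bvSet
def vars (α : Assertion) : Set ℕ := α.l.tvars ∪ α.r.tvars ∪ α.bvSet
def subterms (α : Assertion) : Set Term := α.l.subterms ∪ α.r.subterms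

end Assertion

def afvSet (A : Set Assertion) : Set ℕ := ⋃ β ∈ A, β.fv
def abvSet (A : Set Assertion) : Set ℕ := ⋃ β ∈ A, β.bvSet
def aVarsSet (A : Set Assertion) : Set ℕ := ⋃ β ∈ A, β.vars
def aSubtermsSet (A : Set Assertion) : Set Term := ⋃ β ∈ A, β.subterms

/-- The public terms of an assertion: maximal subterms containing no quantifiable
variable (`Vq` is the set of quantifiable variables). -/
def pubs (Vq : Set ℕ) (α : Assertion) : Set Term :=
  {t | t ∈ α.subterms ∧ t.tvars ∩ Vq = ∅ ∧
    ¬ ∃ u ∈ α.subterms, t ≠ u ∧ t ∈ u.subterms ∧ u.tvars ∩ Vq = ∅}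

/-- prepend an existential quantifier -/
def exA (x : ℕ) (α : Assertion) : Assertion := ⟨x :: α.bv, α.l, α.r⟩

/-- The `0^k` prefix of term positions of an assertion. -/
def prefixL (α : Assertion) : List Bool := List.replicate α.bv.length false

/-- Positions of an assertion at which the variable `x` occurs. -/
def aPosOf (x : ℕ) (α : Assertion) : Set (List Bool) :=
  (fun p => prefixL α ++ false :: p) '' posof x α.l ∪
  (fun p => prefixL α ++ true :: p) '' posof x α.r

/-- Replace the subterms at every (assertion) position in `P` by `r`. -/
noncomputable def aReplace (α : Assertion) (P : Set (List Bool)) (r : Term) : Assertion :=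
  ⟨α.bv,
   replaceAt α.l {p | (prefixL α ++ false :: p) ∈ P} r,
   replaceAt α.r {p | (prefixL α ++ true :: p) ∈ P} r⟩

/-- Abstractable positions of an assertion with respect to `S`. -/
def aAbs (inv : Term → Term) (S : Set Term) (α : Assertion) : Set (List Bool) :=
  (fun p => prefixL α ++ false :: p) '' absPos inv (S ∪ varTerms α.bvSet) α.l ∪
  (fun p => prefixL α ++ true :: p) '' absPos inv (S ∪ varTerms α.bvSet) α.r

/-! ## The assertion derivation system ⊢a -/

inductive adrv (inv : Term → Term) : Set Term → Set Assertion → Assertion → Prop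
  | ax {S A α} : α ∈ A → adrv inv S A α
  | eq {S A t} : dy inv S t → adrv inv S A ⟨[], t, t⟩
  | sym {S A t u} : adrv inv S A ⟨[], t, u⟩ → adrv inv S A ⟨[], u, t⟩
  | trans {S A t u v} : adrv inv S A ⟨[], t, u⟩ → adrv inv S A ⟨[], u, v⟩ →
      adrv inv S A ⟨[], t, v⟩
  | consPair {S A t0 t1 u0 u1} : adrv inv S A ⟨[], t0, u0⟩ → adrv inv S A ⟨[], t1, u1⟩ →
      adrv inv S A ⟨[], Term.pair t0 t1, Term.pair u0 u1⟩
  | consEnc {S A t0 t1 u0 u1} : adrv inv S A ⟨[], t0, u0⟩ → adrv inv S A ⟨[], t1, u1⟩ →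
      adrv inv S A ⟨[], Term.enc t0 t1, Term.enc u0 u1⟩
  | projPairFst {S A t0 t1 u0 u1} :
      adrv inv S A ⟨[], Term.pair t0 t1, Term.pair u0 u1⟩ →
      dy inv S t0 → dy inv S t1 → dy inv S u0 → dy inv S u1 → adrv inv S A ⟨[], t0, u0⟩
  | projPairSnd {S A t0 t1 u0 u1} :
      adrv inv S A ⟨[], Term.pair t0 t1, Term.pair u0 u1⟩ →
      dy inv S t0 → dy inv S t1 → dy inv S u0 → dy inv S u1 → adrv inv S A ⟨[], t1, u1⟩
  | projEncFst {S A t0 t1 u0 u1} :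
      adrv inv S A ⟨[], Term.enc t0 t1, Term.enc u0 u1⟩ →
      dy inv S t0 → dy inv S t1 → dy inv S u0 → dy inv S u1 → adrv inv S A ⟨[], t0, u0⟩
  | projEncSnd {S A t0 t1 u0 u1} :
      adrv inv S A ⟨[], Term.enc t0 t1, Term.enc u0 u1⟩ →
      dy inv S t0 → dy inv S t1 → dy inv S u0 → dy inv S u1 → adrv inv S A ⟨[], t1, u1⟩
  | exI {S A α x t} : adrv inv S A (aReplace α (aPosOf x α) t) → dy inv S t →
      aPosOf x α ⊆ aAbs inv (insert (Term.var x) S) α → adrv inv S A (exA x α)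
  | exE {S A α x γ} : adrv inv S A (exA x α) →
      adrv inv (insert (Term.var x) S) (insert α A) γ →
      x ∉ sVars S → x ∉ afvSet A → x ∉ γ.fv → adrv inv S A γ

/-- ⊢a without the ∃-elimination rule. -/
inductive adrvNX (inv : Term → Term) : Set Term → Set Assertion → Assertion → Prop
  | ax {S A α} : α ∈ A → adrvNX inv S A α
  | eq {S A t} : dy inv S t → adrvNX inv S A ⟨[], t, t⟩
  | sym {S A t u} : adrvNX inv S A ⟨[], t, u⟩ → adrvNX inv S A ⟨[], u, t⟩
  | trans {S A t u v} : adrvNX inv S A ⟨[], t, u⟩ → adrvNX inv S A ⟨[], u, v⟩ →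
      adrvNX inv S A ⟨[], t, v⟩
  | consPair {S A t0 t1 u0 u1} : adrvNX inv S A ⟨[], t0, u0⟩ → adrvNX inv S A ⟨[], t1, u1⟩ →
      adrvNX inv S A ⟨[], Term.pair t0 t1, Term.pair u0 u1⟩
  | consEnc {S A t0 t1 u0 u1} : adrvNX inv S A ⟨[], t0, u0⟩ → adrvNX inv S A ⟨[], t1, u1⟩ →
      adrvNX inv S A ⟨[], Term.enc t0 t1, Term.enc u0 u1⟩
  | projPairFst {S A t0 t1 u0 u1} :
      adrvNX inv S A ⟨[], Term.pair t0 t1, Term.pair u0 u1⟩ →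
      dy inv S t0 → dy inv S t1 → dy inv S u0 → dy inv S u1 → adrvNX inv S A ⟨[], t0, u0⟩
  | projPairSnd {S A t0 t1 u0 u1} :
      adrvNX inv S A ⟨[], Term.pair t0 t1, Term.pair u0 u1⟩ →
      dy inv S t0 → dy inv S t1 → dy inv S u0 → dy inv S u1 → adrvNX inv S A ⟨[], t1, u1⟩
  | projEncFst {S A t0 t1 u0 u1} :
      adrvNX inv S A ⟨[], Term.enc t0 t1, Term.enc u0 u1⟩ →
      dy inv S t0 → dy inv S t1 → dy inv S u0 → dy inv S u1 → adrvNX inv S A ⟨[], t0, u0⟩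
  | projEncSnd {S A t0 t1 u0 u1} :
      adrvNX inv S A ⟨[], Term.enc t0 t1, Term.enc u0 u1⟩ →
      dy inv S t0 → dy inv S t1 → dy inv S u0 → dy inv S u1 → adrvNX inv S A ⟨[], t1, u1⟩
  | exI {S A α x t} : adrvNX inv S A (aReplace α (aPosOf x α) t) → dy inv S t →
      aPosOf x α ⊆ aAbs inv (insert (Term.var x) S) α → adrvNX inv S A (exA x α)

/-- The equality fragment ⊢eq : derivability of equalities `t ⋈ u` from a set `T` of
terms and a set `E` of equalities, without the quantifier rules. -/
inductive eqdrv (inv : Term → Term) (T : Set Term) (E : Set (Term × Term)) :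
    Term → Term → Prop
  | ax {t u} : (t, u) ∈ E → eqdrv inv T E t u
  | eq {t} : dy inv T t → eqdrv inv T E t t
  | sym {t u} : eqdrv inv T E t u → eqdrv inv T E u t
  | trans {t u v} : eqdrv inv T E t u → eqdrv inv T E u v → eqdrv inv T E t v
  | consPair {t0 t1 u0 u1} : eqdrv inv T E t0 u0 → eqdrv inv T E t1 u1 →
      eqdrv inv T E (Term.pair t0 t1) (Term.pair u0 u1)
  | consEnc {t0 t1 u0 u1} : eqdrv inv T E t0 u0 → eqdrv inv T E t1 u1 →
      eqdrv inv T E (Term.enc t0 t1) (Term.enc u0 u1)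
  | projPairFst {t0 t1 u0 u1} : eqdrv inv T E (Term.pair t0 t1) (Term.pair u0 u1) →
      dy inv T t0 → dy inv T t1 → dy inv T u0 → dy inv T u1 → eqdrv inv T E t0 u0
  | projPairSnd {t0 t1 u0 u1} : eqdrv inv T E (Term.pair t0 t1) (Term.pair u0 u1) →
      dy inv T t0 → dy inv T t1 → dy inv T u0 → dy inv T u1 → eqdrv inv T E t1 u1
  | projEncFst {t0 t1 u0 u1} : eqdrv inv T E (Term.enc t0 t1) (Term.enc u0 u1) →
      dy inv T t0 → dy inv T t1 → dy inv T u0 → dy inv T u1 → eqdrv inv T E t0 u0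
  | projEncSnd {t0 t1 u0 u1} : eqdrv inv T E (Term.enc t0 t1) (Term.enc u0 u1) →
      dy inv T t0 → dy inv T t1 → dy inv T u0 → dy inv T u1 → eqdrv inv T E t1 u1

/-! ## Sanitized pairs, kernels, purity, consistency -/

/-- `(S;A)` is sanitized: free variables avoid `Vq`, bound variables are from `Vq`,
and the public terms of each assertion of `A` belong to `S`. -/
def sanitized (Vq : Set ℕ) (S : Set Term) (A : Set Assertion) : Prop :=
  ((sVars S ∪ afvSet A) ∩ Vq = ∅) ∧ (∀ β ∈ A, β.bvSet ⊆ Vq) ∧ (∀ β ∈ A, pubs Vq β ⊆ S)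

def kerT (S : Set Term) (A : Set Assertion) : Set Term := S ∪ varTerms (abvSet A)
def kerE (A : Set Assertion) : Set (Term × Term) := {e | ∃ β ∈ A, e = (β.l, β.r)}
def kerA (A : Set Assertion) : Set Assertion := {γ | ∃ β ∈ A, γ = Assertion.mk [] β.l β.r}

/-- The set of assertions corresponding to a set of equalities. -/
def EtoA (E : Set (Term × Term)) : Set Assertion := {γ | ∃ e ∈ E, γ = Assertion.mk [] e.1 e.2}

/-- `(T;E)` is pure if it is the kernel of some sanitized pair. -/
def isPure (Vq : Set ℕ) (T : Set Term) (E : Set (Term × Term)) : Prop :=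
  ∃ S A, sanitized Vq S A ∧ T = kerT S A ∧ E = kerE A

/-- `(T;E)` is consistent if some ground substitution unifies every equality in `E`. -/
def consistentE (E : Set (Term × Term)) : Prop :=
  ∃ lam : Subst, lam.isGround ∧ ∀ e ∈ E, lam.app e.1 = lam.app e.2

/-- `M`-bounded substitution: every image has at most `M` distinct subterms. -/
def boundedSub (M : ℕ) (μ : Subst) : Prop :=
  ∀ x ∈ μ.dom, (Term.subterms (μ x)).ncard ≤ M



/-! ## Dolev-Yao proof trees -/

inductive DPT : Type
  | ax (t : Term)
  | pair (p q : DPT)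
  | enc (p q : DPT)
  | fst (p : DPT)
  | snd (p : DPT)
  | dec (p q : DPT)

namespace DPT

/-- The conclusion of a DY proof tree, if it is well-formed. -/
def concl (inv : Term → Term) : DPT → Option Term
  | ax t => some t
  | pair p q =>
      match concl inv p, concl inv q with
      | some a, some b => some (Term.pair a b)
      | _, _ => none
  | enc p q =>
      match concl inv p, concl inv q with
      | some a, some b => some (Term.enc a b)
      | _, _ => none
  | fst p =>
      match concl inv p with
      | some (Term.pair a _) => some a
      | _ => none
  | snd p =>
      match concl inv p with
      | some (Term.pair _ b) => some b
      | _ => none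
  | dec p q =>
      match concl inv p, concl inv q with
      | some (Term.enc a k), some k' => if k' = inv k then some a else none
      | _, _ => none

/-- Validity of a DY proof tree from the set `X`. -/
def valid (inv : Term → Term) (X : Set Term) : DPT → Prop
  | ax t => t ∈ X
  | pair p q => valid inv X p ∧ valid inv X q
  | enc p q => valid inv X p ∧ valid inv X q
  | fst p => valid inv X p ∧ ∃ a b, concl inv p = some (Term.pair a b)
  | snd p => valid inv X p ∧ ∃ a b, concl inv p = some (Term.pair a b)
  | dec p q => valid inv X p ∧ valid inv X q ∧
      ∃ a k, concl inv p = some (Term.enc a k) ∧ concl inv q = some (inv k)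

def endsConstructor : DPT → Prop
  | pair _ _ => True
  | enc _ _ => True
  | _ => False

def endsDestructor : DPT → Prop
  | fst _ => True
  | snd _ => True
  | dec _ _ => True
  | _ => False

/-- Normal DY proofs: no constructor conclusion is the major premise of a destructor. -/
def normal : DPT → Prop
  | ax _ => True
  | pair p q => normal p ∧ normal q
  | enc p q => normal p ∧ normal q
  | fst p => normal p ∧ ¬ endsConstructor p
  | snd p => normal p ∧ ¬ endsConstructor p
  | dec p q => normal p ∧ normal q ∧ ¬ endsConstructor p

/-- All terms occurring in a DY proof tree (conclusions of subproofs). -/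
def termSet (inv : Term → Term) : DPT → Set Term
  | ax t => {t}
  | pair p q => {a | concl inv (pair p q) = some a} ∪ termSet inv p ∪ termSet inv q
  | enc p q => {a | concl inv (enc p q) = some a} ∪ termSet inv p ∪ termSet inv q
  | fst p => {a | concl inv (fst p) = some a} ∪ termSet inv p
  | snd p => {a | concl inv (snd p) = some a} ∪ termSet inv p
  | dec p q => {a | concl inv (dec p q) = some a} ∪ termSet inv p ∪ termSet inv q

/-- Typed DY proof w.r.t. a set `G`: every subproof ends in a constructor rule or
has its conclusion in `G`. -/
def typed (inv : Term → Term) (G : Set Term) : DPT → Prop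
  | ax t => t ∈ G
  | pair p q => typed inv G p ∧ typed inv G q
  | enc p q => typed inv G p ∧ typed inv G q
  | fst p => typed inv G p ∧ ∀ a, concl inv (fst p) = some a → a ∈ G
  | snd p => typed inv G p ∧ ∀ a, concl inv (snd p) = some a → a ∈ G
  | dec p q => typed inv G p ∧ typed inv G q ∧ ∀ a, concl inv (dec p q) = some a → a ∈ G

end DPT

/-! ## Equality proof trees (the system ⊢eq), with n-ary trans -/

inductive EPT : Type
  | ax (t u : Term)
  | eq (t : Term) (d : DPT)
  | sym (t u : Term) (p : EPT)
  | trans (t u : Term) (ps : List EPT)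
  | consPair (t0 u0 t1 u1 : Term) (p q : EPT)
  | consEnc (t0 u0 t1 u1 : Term) (p q : EPT)
  | projPairFst (t0 t1 u0 u1 : Term) (p : EPT)
  | projPairSnd (t0 t1 u0 u1 : Term) (p : EPT)
  | projEncFst (t0 t1 u0 u1 : Term) (p : EPT)
  | projEncSnd (t0 t1 u0 u1 : Term) (p : EPT)

namespace EPT

/-- The conclusion `t ⋈ u` of an equality proof tree. -/
def concl : EPT → Term × Term
  | ax t u => (t, u)
  | eq t _ => (t, t)
  | sym t u _ => (t, u)
  | trans t u _ => (t, u)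
  | consPair t0 u0 t1 u1 _ _ => (Term.pair t0 t1, Term.pair u0 u1)
  | consEnc t0 u0 t1 u1 _ _ => (Term.enc t0 t1, Term.enc u0 u1)
  | projPairFst t0 _ u0 _ _ => (t0, u0)
  | projPairSnd _ t1 _ u1 _ => (t1, u1)
  | projEncFst t0 _ u0 _ _ => (t0, u0)
  | projEncSnd _ t1 _ u1 _ => (t1, u1)

/-- Immediate subproof relation. -/
inductive Sub : EPT → EPT → Prop
  | sym {t u p} : Sub p (EPT.sym t u p)
  | trans {t u ps p} : p ∈ ps → Sub p (EPT.trans t u ps)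
  | consPairL {t0 u0 t1 u1 p q} : Sub p (EPT.consPair t0 u0 t1 u1 p q)
  | consPairR {t0 u0 t1 u1 p q} : Sub q (EPT.consPair t0 u0 t1 u1 p q)
  | consEncL {t0 u0 t1 u1 p q} : Sub p (EPT.consEnc t0 u0 t1 u1 p q)
  | consEncR {t0 u0 t1 u1 p q} : Sub q (EPT.consEnc t0 u0 t1 u1 p q)
  | projPairFst {t0 t1 u0 u1 p} : Sub p (EPT.projPairFst t0 t1 u0 u1 p)
  | projPairSnd {t0 t1 u0 u1 p} : Sub p (EPT.projPairSnd t0 t1 u0 u1 p)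
  | projEncFst {t0 t1 u0 u1 p} : Sub p (EPT.projEncFst t0 t1 u0 u1 p)
  | projEncSnd {t0 t1 u0 u1 p} : Sub p (EPT.projEncSnd t0 t1 u0 u1 p)

/-- `Subproof p q`: `p` is a (not necessarily proper) subproof of `q`. -/
def Subproof : EPT → EPT → Prop := Relation.ReflTransGen Sub

def isAx : EPT → Prop
  | ax _ _ => True
  | _ => False

def isTrans : EPT → Prop
  | trans _ _ _ => True
  | _ => False

def isCons : EPT → Prop
  | consPair _ _ _ _ _ _ => True
  | consEnc _ _ _ _ _ _ => True
  | _ => False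

def isProj : EPT → Prop
  | projPairFst _ _ _ _ _ => True
  | projPairSnd _ _ _ _ _ => True
  | projEncFst _ _ _ _ _ => True
  | projEncSnd _ _ _ _ _ => True
  | _ => False

/-- The ⊢eq proof contains an occurrence of the cons rule. -/
def containsCons (π : EPT) : Prop := ∃ π', Subproof π' π ∧ isCons π'

/-- Local validity of the last rule of an equality proof tree. -/
def localValid (inv : Term → Term) (T : Set Term) (E : Set (Term × Term)) : EPT → Prop
  | ax t u => (t, u) ∈ E
  | eq t d => DPT.valid inv T d ∧ DPT.concl inv d = some t
  | sym t u p => concl p = (u, t)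
  | trans t u ps =>
      ps ≠ [] ∧ (ps.head?.map fun p => (concl p).1) = some t ∧
      (ps.getLast?.map fun p => (concl p).2) = some u ∧
      List.Chain' (fun p q => (concl p).2 = (concl q).1) ps
  | consPair t0 u0 t1 u1 p q => concl p = (t0, u0) ∧ concl q = (t1, u1)
  | consEnc t0 u0 t1 u1 p q => concl p = (t0, u0) ∧ concl q = (t1, u1)
  | projPairFst t0 t1 u0 u1 p => concl p = (Term.pair t0 t1, Term.pair u0 u1) ∧
      dy inv T t0 ∧ dy inv T t1 ∧ dy inv T u0 ∧ dy inv T u1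
  | projPairSnd t0 t1 u0 u1 p => concl p = (Term.pair t0 t1, Term.pair u0 u1) ∧
      dy inv T t0 ∧ dy inv T t1 ∧ dy inv T u0 ∧ dy inv T u1
  | projEncFst t0 t1 u0 u1 p => concl p = (Term.enc t0 t1, Term.enc u0 u1) ∧
      dy inv T t0 ∧ dy inv T t1 ∧ dy inv T u0 ∧ dy inv T u1
  | projEncSnd t0 t1 u0 u1 p => concl p = (Term.enc t0 t1, Term.enc u0 u1) ∧
      dy inv T t0 ∧ dy inv T t1 ∧ dy inv T u0 ∧ dy inv T u1

/-- Validity of an equality proof tree from `(T;E)`. -/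
def valid (inv : Term → Term) (T : Set Term) (E : Set (Term × Term)) (π : EPT) : Prop :=
  ∀ π', Subproof π' π → localValid inv T E π'

/-- Local normality conditions for the last rule. -/
def localNormal : EPT → Prop
  | ax _ _ => True
  | eq _ d => DPT.normal d ∧ DPT.endsDestructor d
  | sym _ _ p => isAx p
  | trans _ _ ps =>
      (∀ p ∈ ps, ¬ isTrans p ∧ (concl p).1 ≠ (concl p).2) ∧
      List.Chain' (fun p q => ¬ (isCons p ∧ isCons q)) ps
  | consPair _ _ _ _ _ _ => True
  | consEnc _ _ _ _ _ _ => True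
  | projPairFst _ _ _ _ p => ¬ containsCons p
  | projPairSnd _ _ _ _ p => ¬ containsCons p
  | projEncFst _ _ _ _ p => ¬ containsCons p
  | projEncSnd _ _ _ _ p => ¬ containsCons p

/-- A normal ⊢eq proof. -/
def normalP (π : EPT) : Prop := ∀ π', Subproof π' π → localNormal π'

/-- The DY subproof attached to an `eq` node, if any. -/
def dSub : EPT → Option DPT
  | eq _ d => some d
  | _ => none

/-- All terms occurring in an ⊢eq proof: the terms of the conclusions of all
subproofs, including the DY subproofs. -/
def termSet (inv : Term → Term) (π : EPT) : Set Term :=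
  {a | ∃ π', Subproof π' π ∧
    (a = (concl π').1 ∨ a = (concl π').2 ∨
      ∃ d, dSub π' = some d ∧ a ∈ DPT.termSet inv d)}

/-- Typed ⊢eq proof w.r.t. a set `Typ` of typed terms: every subproof contains
cons, or proves a trivial equality, or has typed conclusion terms. -/
def typedP (Typ : Set Term) (π : EPT) : Prop :=
  ∀ π', Subproof π' π →
    containsCons π' ∨ (concl π').1 = (concl π').2 ∨
      ((concl π').1 ∈ Typ ∧ (concl π').2 ∈ Typ)

end EPT



/-! ## The fixed run setting -/

/-- A fixed run of a protocol: at step `i` (for `1 ≤ i ≤ n`) the honest agent `uᵢ`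
receives the assertion `β i` from the intruder and sends the assertion `α i`;
`(T i; E i)` and `(U i; F i)` are the kernels of the knowledge states of the
intruder and of `uᵢ`; `σ` is the ground substitution of the run, `μ i`/`θ i` the
witness substitutions, `ω` their composition, and `m` the spare name. -/
structure RunSetting : Type where
  inv : Term → Term
  Vq : Set ℕ
  n : ℕ
  β : ℕ → Assertion
  α : ℕ → Assertion
  T : ℕ → Set Term
  E : ℕ → Set (Term × Term)
  U : ℕ → Set Term
  F : ℕ → Set (Term × Term)
  σ : Subst
  μ : ℕ → Subst
  θ : ℕ → Subst
  ω : Subst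
  m : ℕ
  -- well-formedness of the communicated assertions
  hβbv : ∀ i, 1 ≤ i → i ≤ n → (β i).bvSet ⊆ Vq
  hαbv : ∀ i, 1 ≤ i → i ≤ n → (α i).bvSet ⊆ Vq
  hβfv : ∀ i, 1 ≤ i → i ≤ n → (β i).fv ∩ Vq = ∅
  hαfv : ∀ i, 1 ≤ i → i ≤ n → (α i).fv ∩ Vq = ∅
  -- σ is ground, defined on the intruder variables of the run, and fixes Vq
  hσVq : ∀ x ∈ Vq, σ x = Term.var x
  hσground : ∀ x ∈ σ.dom, (σ x).ground
  -- evolution of the kernels of the intruder's knowledge state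
  hT0 : ∀ t ∈ T 0, t.ground
  hE0 : E 0 = ∅
  hTmono : ∀ i, T i ⊆ T (i + 1)
  hEmono : ∀ i, E i ⊆ E (i + 1)
  hTstep : ∀ i, 1 ≤ i → i ≤ n →
    T i = T (i - 1) ∪ pubs Vq (α i) ∪ varTerms (α i).bvSet
  hEstep : ∀ i, 1 ≤ i → i ≤ n → E i = E (i - 1) ∪ {((α i).l, (α i).r)}
  -- knowledge states are finite
  hTfin : ∀ i, i ≤ n → (T i).Finite
  hEfin : ∀ i, i ≤ n → (E i).Finite
  hUfin : ∀ i, i ≤ n → (U i).Finite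
  hFfin : ∀ i, i ≤ n → (F i).Finite
  -- provenance of honest agents' kernels
  hUmem : ∀ i, 1 ≤ i → i ≤ n → ∀ t ∈ U i,
    (∃ x ∈ Vq, t = Term.var x) ∨ t.tvars ⊆ σ.dom
  hFmem : ∀ i, 1 ≤ i → i ≤ n → ∀ e ∈ F i,
    ∃ j, 1 ≤ j ∧ j ≤ i ∧ e = ((β j).l, (β j).r)
  -- variables sent by honest agents were received earlier (Observation 2 of the paper)
  hfvEarlier : ∀ i, 1 ≤ i → i ≤ n → ∀ x ∈ (α i).fv,
    ∃ j, 1 ≤ j ∧ j ≤ i ∧ x ∈ (β j).fv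
  -- witness substitutions and the derivability conditions of the run
  hμdom : ∀ i, 1 ≤ i → i ≤ n → (μ i).dom ⊆ (β i).bvSet
  hθdom : ∀ i, 1 ≤ i → i ≤ n → (θ i).dom ⊆ (α i).bvSet
  hμdy : ∀ i, 1 ≤ i → i ≤ n → ∀ x ∈ (μ i).dom,
    dy inv (Subst.app σ '' T (i - 1)) (μ i x)
  hμeq : ∀ i, 1 ≤ i → i ≤ n →
    eqdrv inv (Subst.app σ '' T (i - 1)) (pairImg σ (E (i - 1)))
      (σ.app ((μ i).app (β i).l)) (σ.app ((μ i).app (β i).r))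
  hθdy : ∀ i, 1 ≤ i → i ≤ n → ∀ x ∈ (θ i).dom,
    dy inv (Subst.app σ '' U i) (θ i x)
  hθeq : ∀ i, 1 ≤ i → i ≤ n →
    eqdrv inv (Subst.app σ '' U i) (pairImg σ (F i))
      (σ.app ((θ i).app (α i).l)) (σ.app ((θ i).app (α i).r))
  -- ω is the composition σμ₁θ₁…μₙθₙ
  hωσ : ∀ x, ω.app (σ x) = ω x
  hωμ : ∀ i, 1 ≤ i → i ≤ n → ∀ x, ω.app ((μ i) x) = ω x
  hωθ : ∀ i, 1 ≤ i → i ≤ n → ∀ x, ω.app ((θ i) x) = ω x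
  hωground : ∀ x ∈ ω.dom, (ω x).ground
  hωT : ∀ i, i ≤ n → ∀ t ∈ T i ∪ U i, (ω.app t).ground
  hωE : ∀ i, i ≤ n → ∀ e ∈ E i ∪ F i, (ω.app e.1).ground ∧ (ω.app e.2).ground
  -- the spare name m
  hm : Term.name m ∈ T 0
  hmβ : ∀ i, 1 ≤ i → i ≤ n →
    Term.name m ∉ (β i).subterms ∪ (α i).subterms
  hmμ : ∀ i, 1 ≤ i → i ≤ n → ∀ x ∈ (μ i).dom, Term.name m ∉ (μ i x).subterms
  hmθ : ∀ i, 1 ≤ i → i ≤ n → ∀ x ∈ (θ i).dom, Term.name m ∉ (θ i x).subterms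

namespace RunSetting

variable (R : RunSetting)

/-- The public terms of the `i`-th intruder send. -/
def IT (i : ℕ) : Set Term := pubs R.Vq (R.β i)

/-- The public terms of the `i`-th honest agent send. -/
def HT (i : ℕ) : Set Term := pubs R.Vq (R.α i)

/-- The type set 𝒞 of the run. -/
def C : Set Term :=
  ⋃ i ∈ Set.Iic R.n, (sSubterms (R.T i ∪ R.U i) ∪ pairSubterms (R.E i ∪ R.F i))

/-- The type set 𝒟 = 𝒞 ∖ 𝒱 of the run. -/
def D : Set Term := R.C \ Set.range Term.var

/-- A variable is minimal if its ω-image coincides with the ω-image of no term of 𝒟. -/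
def minimal (x : ℕ) : Prop := x ∈ R.ω.dom ∧ ¬ ∃ t ∈ R.D, R.ω.app t = R.ω x

/-- A term is zappable if it ω-unifies with some minimal variable. -/
def zappable (t : Term) : Prop := ∃ x, R.minimal x ∧ R.ω.app t = R.ω x

/-- The zap of a term: zappable terms get replaced by the spare name `m`. -/
noncomputable def zap : Term → Term
  | Term.var x => Term.var x
  | Term.name k => if R.zappable (Term.name k) then Term.name R.m else Term.name k
  | Term.pair a b =>
      if R.zappable (Term.pair a b) then Term.name R.m
      else Term.pair (zap a) (zap b)
  | Term.enc a b =>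
      if R.zappable (Term.enc a b) then Term.name R.m
      else Term.enc (zap a) (zap b)

/-- The small substitution λ* corresponding to λ. -/
noncomputable def star (lam : Subst) : Subst := fun x => R.zap (lam x)

/-- The set of typed terms: σ(𝒟) ∪ ω(𝒞) ∪ 𝒱_q. -/
def typedSet : Set Term :=
  Subst.app R.σ '' R.D ∪ Subst.app R.ω '' R.C ∪ varTerms R.Vq

/-- A typed term. -/
def typedTerm (t : Term) : Prop := t ∈ R.typedSet

end RunSetting



/-! ### Auxiliary lemmas for stmt16 -/

lemma subterms_self (t : Term) : t ∈ t.subterms := by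
  cases t <;> simp [Term.subterms]

lemma subterms_trans : ∀ t s : Term, s ∈ t.subterms → s.subterms ⊆ t.subterms := by
  intro t
  induction t with
  | name n => intro s hs; simp [Term.subterms] at hs; subst hs; exact le_refl _
  | var x => intro s hs; simp [Term.subterms] at hs; subst hs; exact le_refl _
  | pair a b iha ihb =>
      intro s hs
      simp only [Term.subterms, Set.mem_insert_iff, Set.mem_union] at hs
      rcases hs with h | h | h
      · subst h; exact le_refl _
      · exact (iha s h).trans (by intro z hz; simp [Term.subterms]; tauto)
      · exact (ihb s h).trans (by intro z hz; simp [Term.subterms]; tauto)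
  | enc a b iha ihb =>
      intro s hs
      simp only [Term.subterms, Set.mem_insert_iff, Set.mem_union] at hs
      rcases hs with h | h | h
      · subst h; exact le_refl _
      · exact (iha s h).trans (by intro z hz; simp [Term.subterms]; tauto)
      · exact (ihb s h).trans (by intro z hz; simp [Term.subterms]; tauto)

lemma C_subterm_closed (R : RunSetting) {t s : Term} (ht : t ∈ R.C)
    (hs : s ∈ t.subterms) : s ∈ R.C := by
  simp only [RunSetting.C, sSubterms, pairSubterms, Set.mem_iUnion, Set.mem_union,
    exists_prop] at ht ⊢
  obtain ⟨j, hj, hmem⟩ := ht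
  refine ⟨j, hj, ?_⟩
  rcases hmem with ⟨u, hu, htu⟩ | ⟨e, he, htu⟩
  · exact Or.inl ⟨u, hu, subterms_trans u t htu hs⟩
  · refine Or.inr ⟨e, he, ?_⟩
    rcases htu with h | h
    · exact Or.inl (subterms_trans _ t h hs)
    · exact Or.inr (subterms_trans _ t h hs)

lemma not_zappable_of_mem_C (R : RunSetting) {t : Term} (ht : t ∈ R.C)
    (hnv : ∀ x, t ≠ Term.var x) : ¬ R.zappable t := by
  rintro ⟨x, ⟨hxdom, hxmin⟩, hωt⟩
  exact hxmin ⟨t, ⟨ht, by rintro ⟨y, rfl⟩; exact hnv y rfl⟩, hωt⟩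

lemma zap_eq_self_of_mem_C (R : RunSetting) : ∀ t ∈ R.C, R.zap t = t := by
  intro t
  induction t with
  | name n =>
      intro ht
      have := not_zappable_of_mem_C R ht (by intro x h; cases h)
      simp [RunSetting.zap, this]
  | var x => intro _; simp [RunSetting.zap]
  | pair a b iha ihb =>
      intro ht
      have hnz := not_zappable_of_mem_C R ht (by intro x h; cases h)
      have ha : a ∈ R.C := C_subterm_closed R ht (by simp [Term.subterms, subterms_self])
      have hb : b ∈ R.C := C_subterm_closed R ht (by simp [Term.subterms, subterms_self])
      simp [RunSetting.zap, hnz, iha ha, ihb hb]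
  | enc a b iha ihb =>
      intro ht
      have hnz := not_zappable_of_mem_C R ht (by intro x h; cases h)
      have ha : a ∈ R.C := C_subterm_closed R ht (by simp [Term.subterms, subterms_self])
      have hb : b ∈ R.C := C_subterm_closed R ht (by simp [Term.subterms, subterms_self])
      simp [RunSetting.zap, hnz, iha ha, ihb hb]

lemma omega_app_comp (R : RunSetting) (lam : Subst)
    (h : ∀ x, R.ω.app (lam x) = R.ω x) :
    ∀ u : Term, R.ω.app (lam.app u) = R.ω.app u := by
  intro u
  induction u with
  | name n => simp [Subst.app]
  | var x => simpa [Subst.app] using h x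
  | pair a b iha ihb => simp [Subst.app, iha, ihb]
  | enc a b iha ihb => simp [Subst.app, iha, ihb]

lemma zappable_app_iff (R : RunSetting) (lam : Subst)
    (h : ∀ x, R.ω.app (lam x) = R.ω x) (u : Term) :
    R.zappable (lam.app u) ↔ R.zappable u := by
  unfold RunSetting.zappable
  rw [omega_app_comp R lam h u]

lemma star_app_zap (R : RunSetting) (lam : Subst)
    (h : ∀ x, R.ω.app (lam x) = R.ω x) :
    ∀ u : Term, (R.star lam).app (R.zap u) = R.zap (lam.app u) := by
  intro u
  induction u with
  | name n =>
      by_cases hz : R.zappable (Term.name n) <;>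
        simp [RunSetting.zap, Subst.app, hz]
  | var x => simp [RunSetting.zap, RunSetting.star, Subst.app]
  | pair a b iha ihb =>
      by_cases hz : R.zappable (Term.pair a b)
      · have hz' : R.zappable (lam.app (Term.pair a b)) :=
          (zappable_app_iff R lam h _).mpr hz
        simp only [Subst.app] at hz' ⊢
        simp [RunSetting.zap, hz, hz', Subst.app]
      · have hz' : ¬ R.zappable (lam.app (Term.pair a b)) := fun hc =>
          hz ((zappable_app_iff R lam h _).mp hc)
        simp only [Subst.app] at hz' ⊢
        simp [RunSetting.zap, hz, hz', Subst.app, iha, ihb]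
  | enc a b iha ihb =>
      by_cases hz : R.zappable (Term.enc a b)
      · have hz' : R.zappable (lam.app (Term.enc a b)) :=
          (zappable_app_iff R lam h _).mpr hz
        simp only [Subst.app] at hz' ⊢
        simp [RunSetting.zap, hz, hz', Subst.app]
      · have hz' : ¬ R.zappable (lam.app (Term.enc a b)) := fun hc =>
          hz ((zappable_app_iff R lam h _).mp hc)
        simp only [Subst.app] at hz' ⊢
        simp [RunSetting.zap, hz, hz', Subst.app, iha, ihb]

/-- Lemma (zap-taunut). -/
theorem stmt16 (R : RunSetting) (i : ℕ) (h1 : 1 ≤ i) (h2 : i ≤ R.n)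
    (t : Term) (ht : t ∈ R.C) :
    (R.star R.σ).app ((R.star (R.μ i)).app t)
      = R.zap (R.σ.app ((R.μ i).app t)) := by
  have hμ : ∀ x, R.ω.app (R.μ i x) = R.ω x := R.hωμ i h1 h2
  have h1' : (R.star (R.μ i)).app t = R.zap ((R.μ i).app t) := by
    rw [← zap_eq_self_of_mem_C R t ht, star_app_zap R (R.μ i) hμ t,
      zap_eq_self_of_mem_C R t ht]
  rw [h1', star_app_zap R R.σ R.hωσ]
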